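/- arXiv:1209.1086 — 5 statements merged into one kernel-verified Lean document; each statement's English description precedes it below -/
import Mathlib

section
/- Let (N_1, ..., N_K) be a multinomial random variable with parameters n and (μ(C_1), ..., μ(C_K)) where the μ(C_i) are nonnegative and sum to 1. Then for any λ > 0, Pr[ Σ_{i=1}^K |N_i/n − μ(C_i)| ≥ λ ] ≤ 2^K exp(−n λ² / 2). Consequently, with probability at least 1 − δ, Σ_{i=1}^K |N_i/n − μ(C_i)| ≤ sqrt((2K ln 2 + 2 ln(1/δ)) / n). -/
open MeasureTheory ProbabilityTheory



/-- Hoeffding's lemma for Bernoulli variables. -/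
lemma bernoulli_mgf_le {q : ℝ} (h0 : 0 ≤ q) (h1 : q ≤ 1) (s : ℝ) :
    1 - q + q * Real.exp s ≤ Real.exp (q * s + s ^ 2 / 8) := by
  set g : ℝ → ℝ := fun x => 1 - q + q * Real.exp x with hg_def
  have hgpos : ∀ x, 0 < g x := by
    intro x
    rcases lt_or_ge q 1 with h | h
    · have : 0 < 1 - q := by linarith
      have : 0 ≤ q * Real.exp x := mul_nonneg h0 (Real.exp_pos x).le
      simp only [hg_def]; linarith
    · have hq1 : q = 1 := le_antisymm h1 h
      simp [hg_def, hq1]; positivity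
  have hg' : ∀ x, HasDerivAt g (q * Real.exp x) x := by
    intro x
    exact ((Real.hasDerivAt_exp x).const_mul q).const_add (1 - q)
  -- F x = q*x + x^2/8 - log (g x), show F ≥ 0
  set F : ℝ → ℝ := fun x => q * x + x ^ 2 / 8 - Real.log (g x) with hF_def
  set F' : ℝ → ℝ := fun x => q + x / 4 - q * Real.exp x / g x with hF'_def
  have hF' : ∀ x, HasDerivAt F (F' x) x := by
    intro x
    have h1' : HasDerivAt (fun x : ℝ => q * x + x ^ 2 / 8) (q + x * 2 / 8) x := by
      have := ((hasDerivAt_pow 2 x).div_const 8).const_add 0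
      have h2 : HasDerivAt (fun x : ℝ => q * x) q x := by
        simpa using (hasDerivAt_id x).const_mul q
      simpa [mul_comm] using h2.fun_add ((hasDerivAt_pow 2 x).div_const 8)
    have hlog : HasDerivAt (fun x => Real.log (g x)) (q * Real.exp x / g x) x :=
      (hg' x).log (hgpos x).ne'
    have := h1'.fun_sub hlog
    refine this.congr_deriv ?_
    simp only [hF'_def]; ring
  have hF'' : ∀ x, HasDerivAt F' (1 / 4 - q * Real.exp x * (1 - q) / (g x) ^ 2) x := by
    intro x
    have hdiv : HasDerivAt (fun x => q * Real.exp x / g x)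
        ((q * Real.exp x * g x - q * Real.exp x * (q * Real.exp x)) / (g x) ^ 2) x :=
      ((Real.hasDerivAt_exp x).const_mul q).div (hg' x) (hgpos x).ne'
    have hlin : HasDerivAt (fun x : ℝ => q + x / 4) (1 / 4) x := by
      simpa using ((hasDerivAt_id x).div_const 4).const_add q
    have := hlin.fun_sub hdiv
    refine this.congr_deriv ?_
    have : q * Real.exp x * g x - q * Real.exp x * (q * Real.exp x)
        = q * Real.exp x * (1 - q) := by simp only [hg_def]; ring
    rw [this]
  have hF''nonneg : ∀ x, 0 ≤ 1 / 4 - q * Real.exp x * (1 - q) / (g x) ^ 2 := by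
    intro x
    rw [sub_nonneg, div_le_iff₀ (pow_pos (hgpos x) 2)]
    have h4 : 4 * ((1 - q) * (q * Real.exp x)) ≤ (1 - q + q * Real.exp x) ^ 2 := by
      nlinarith [sq_nonneg (1 - q - q * Real.exp x)]
    have : (g x) ^ 2 = (1 - q + q * Real.exp x) ^ 2 := by simp [hg_def]
    rw [this]; nlinarith
  have hF'mono : Monotone F' := by
    have hd : ∀ x, deriv F' x = 1 / 4 - q * Real.exp x * (1 - q) / (g x) ^ 2 :=
      fun x => (hF'' x).deriv
    refine monotone_of_deriv_nonneg (fun x => (hF'' x).differentiableAt) ?_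
    intro x; rw [hd]; exact hF''nonneg x
  have hF'0 : F' 0 = 0 := by
    simp only [hF'_def, hg_def]
    simp
  have hF0 : F 0 = 0 := by
    have : g 0 = 1 := by simp [hg_def]
    simp [hF_def, this]
  have hFnonneg : 0 ≤ F s := by
    rcases le_or_gt 0 s with hs | hs
    · have hmono : MonotoneOn F (Set.Ici 0) := by
        refine monotoneOn_of_deriv_nonneg (convex_Ici 0)
          (fun x _ => (hF' x).continuousAt.continuousWithinAt)
          (fun x _ => ((hF' x).differentiableAt).differentiableWithinAt) ?_
        intro x hx
        rw [(hF' x).deriv]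
        have : (0:ℝ) ≤ x := le_of_lt (by simpa using hx)
        calc (0:ℝ) = F' 0 := hF'0.symm
          _ ≤ F' x := hF'mono this
      have := hmono (Set.self_mem_Ici) (by exact hs) hs
      linarith [hF0 ▸ this]
    · have hanti : AntitoneOn F (Set.Iic 0) := by
        refine antitoneOn_of_deriv_nonpos (convex_Iic 0)
          (fun x _ => (hF' x).continuousAt.continuousWithinAt)
          (fun x _ => ((hF' x).differentiableAt).differentiableWithinAt) ?_
        intro x hx
        rw [(hF' x).deriv]
        have hx0 : x ≤ 0 := le_of_lt (by simpa using hx)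
        calc F' x ≤ F' 0 := hF'mono hx0
          _ = 0 := hF'0
      have := hanti (by exact hs.le : s ∈ Set.Iic 0) (Set.self_mem_Iic) hs.le
      linarith [hF0 ▸ this]
  have hlog_le : Real.log (g s) ≤ q * s + s ^ 2 / 8 := by
    simp only [hF_def] at hFnonneg; linarith
  calc 1 - q + q * Real.exp s = g s := rfl
    _ = Real.exp (Real.log (g s)) := (Real.exp_log (hgpos s)).symm
    _ ≤ Real.exp (q * s + s ^ 2 / 8) := Real.exp_le_exp.mpr hlog_le


set_option maxHeartbeats 1000000 in
lemma bhc_tail_bound {Ω : Type*} [MeasureSpace Ω] [IsProbabilityMeasure (ℙ : Measure Ω)]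
    (n K : ℕ) (q lam : ℝ) (hq0 : 0 ≤ q) (hq1 : q ≤ 1) (hlam : 0 < lam)
    (X : Fin n → Ω → Fin K) (hmeas : ∀ i, Measurable (X i))
    (hindep : iIndepFun X ℙ)
    (A : Finset (Fin K))
    (hq : ∀ i, ℙ {ω | X i ω ∈ A} = ENNReal.ofReal q) :
    ℙ {ω | (n : ℝ) * q + n * lam / 2 ≤ ∑ i, (if X i ω ∈ A then (1 : ℝ) else 0)}
      ≤ ENNReal.ofReal (Real.exp (-(n : ℝ) * lam ^ 2 / 2)) := by
  classical
  set Y : Fin n → Ω → ℝ := fun i ω => if X i ω ∈ A then (1 : ℝ) else 0 with hY_def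
  have hf_meas : Measurable (fun x : Fin K => if x ∈ A then (1 : ℝ) else 0) :=
    measurable_of_finite _
  have hYmeas : ∀ i, Measurable (Y i) := fun i => hf_meas.comp (hmeas i)
  have hYindep : iIndepFun Y ℙ :=
    hindep.comp (fun _ x => if x ∈ A then (1 : ℝ) else 0) (fun _ => hf_meas)
  set t : ℝ := 2 * lam with ht_def
  have ht : 0 ≤ t := by positivity
  -- B i measurable with measure ofReal q
  have hBmeas : ∀ i, MeasurableSet {ω | X i ω ∈ A} := fun i =>
    (hmeas i) (MeasurableSet.of_discrete)
  -- pointwise form of exp (t * Y i ω)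
  have hpt : ∀ i ω, Real.exp (t * Y i ω)
      = Set.indicator {ω | X i ω ∈ A} (fun _ => Real.exp t - 1) ω + 1 := by
    intro i ω
    by_cases h : X i ω ∈ A
    · simp [hY_def, h, Set.indicator_of_mem (show ω ∈ {ω | X i ω ∈ A} from h)]
    · simp [hY_def, h, Set.indicator_of_notMem (show ω ∉ {ω | X i ω ∈ A} from h)]
  have h_int : ∀ i, Integrable (fun ω => Real.exp (t * Y i ω)) ℙ := by
    intro i
    have : Integrable (fun ω =>
        Set.indicator {ω | X i ω ∈ A} (fun _ => Real.exp t - 1) ω + 1) ℙ :=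
      ((integrable_const (Real.exp t - 1)).indicator (hBmeas i)).add (integrable_const 1)
    exact this.congr (Filter.Eventually.of_forall fun ω => (hpt i ω).symm)
  -- mgf of each Y i
  have hmgf : ∀ i, mgf (Y i) ℙ t = 1 - q + q * Real.exp t := by
    intro i
    have h1 : mgf (Y i) ℙ t
        = ∫ ω, (Set.indicator {ω | X i ω ∈ A} (fun _ => Real.exp t - 1) ω + 1) ∂ℙ := by
      unfold mgf
      exact integral_congr_ae (Filter.Eventually.of_forall fun ω => hpt i ω)
    rw [h1, integral_add ((integrable_const (Real.exp t - 1)).indicator (hBmeas i))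
      (integrable_const 1), integral_indicator_const _ (hBmeas i), integral_const]
    simp [measureReal_def, hq i, ENNReal.toReal_ofReal hq0]
    ring
  -- mgf of the sum
  have hmgf_sum : mgf (∑ i, Y i) ℙ t = (1 - q + q * Real.exp t) ^ n := by
    rw [hYindep.mgf_sum hYmeas Finset.univ]
    simp [hmgf]
  -- integrability of exp (t * sum)
  have hS_le : ∀ ω, (∑ i, Y i) ω ≤ n := by
    intro ω
    rw [Finset.sum_apply]
    calc ∑ i, Y i ω ≤ ∑ _i : Fin n, (1 : ℝ) := by
          refine Finset.sum_le_sum fun i _ => ?_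
          simp only [hY_def]; split <;> norm_num
      _ = n := by simp
  have hS_nonneg : ∀ ω, 0 ≤ (∑ i, Y i) ω := by
    intro ω
    rw [Finset.sum_apply]
    refine Finset.sum_nonneg fun i _ => ?_
    simp only [hY_def]; split <;> norm_num
  have hSmeas : Measurable (fun ω => ∑ i, Y i ω) :=
    Finset.measurable_sum Finset.univ fun i _ => hYmeas i
  have h_int_sum : Integrable (fun ω => Real.exp (t * (∑ i, Y i) ω)) ℙ := by
    have h1 : Integrable (fun ω => Real.exp (t * ∑ i, Y i ω)) ℙ := by
      refine Integrable.mono' (integrable_const (Real.exp (t * n)))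
        (Real.measurable_exp.comp (hSmeas.const_mul t)).aestronglyMeasurable
        (Filter.Eventually.of_forall fun ω => ?_)
      rw [Real.norm_eq_abs, Real.abs_exp, Real.exp_le_exp]
      have := hS_le ω
      rw [Finset.sum_apply] at this
      exact mul_le_mul_of_nonneg_left this ht
    exact h1.congr (Filter.Eventually.of_forall fun ω => by simp [Finset.sum_apply])
  -- Chernoff
  have hcher := measure_ge_le_exp_mul_mgf (X := ∑ i, Y i) (μ := ℙ)
    ((n : ℝ) * q + n * lam / 2) ht h_int_sum
  rw [hmgf_sum] at hcher
  -- bound the RHS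
  have hbase_nonneg : 0 ≤ 1 - q + q * Real.exp t := by nlinarith [Real.exp_pos t]
  have hbase_le : (1 - q + q * Real.exp t) ^ n
      ≤ Real.exp (q * t + t ^ 2 / 8) ^ n :=
    pow_le_pow_left₀ hbase_nonneg (bernoulli_mgf_le hq0 hq1 t) n
  have hrhs : Real.exp (-t * ((n : ℝ) * q + n * lam / 2))
        * Real.exp (q * t + t ^ 2 / 8) ^ n
      = Real.exp (-(n : ℝ) * lam ^ 2 / 2) := by
    rw [← Real.exp_nat_mul, ← Real.exp_add]
    congr 1
    simp only [ht_def]; ring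
  have hfinal : (ℙ {ω | (n : ℝ) * q + n * lam / 2 ≤ (∑ i, Y i) ω}).toReal
      ≤ Real.exp (-(n : ℝ) * lam ^ 2 / 2) := by
    calc (ℙ {ω | (n : ℝ) * q + n * lam / 2 ≤ (∑ i, Y i) ω}).toReal
        ≤ Real.exp (-t * ((n : ℝ) * q + n * lam / 2))
          * (1 - q + q * Real.exp t) ^ n := hcher
      _ ≤ Real.exp (-t * ((n : ℝ) * q + n * lam / 2))
          * Real.exp (q * t + t ^ 2 / 8) ^ n := by
          exact mul_le_mul_of_nonneg_left hbase_le (Real.exp_pos _).le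
      _ = Real.exp (-(n : ℝ) * lam ^ 2 / 2) := hrhs
  have hset : {ω | (n : ℝ) * q + n * lam / 2 ≤ ∑ i, (if X i ω ∈ A then (1 : ℝ) else 0)}
      = {ω | (n : ℝ) * q + n * lam / 2 ≤ (∑ i, Y i) ω} := by
    ext ω; simp [hY_def, Finset.sum_apply]
  rw [hset, ← ENNReal.ofReal_toReal (measure_ne_top ℙ _)]
  exact ENNReal.ofReal_le_ofReal hfinal
set_option maxHeartbeats 1000000 in
/-- Bretagnolle–Huber–Carol inequality for multinomial random variables. -/
theorem bretagnolle_huber_carol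
    {Ω : Type*} [MeasureSpace Ω] [IsProbabilityMeasure (ℙ : Measure Ω)]
    (n K : ℕ) (hn : 0 < n)
    (p : Fin K → ℝ) (hp_nonneg : ∀ k, 0 ≤ p k) (hp_sum : ∑ k, p k = 1)
    (X : Fin n → Ω → Fin K)
    (hmeas : ∀ i, Measurable (X i))
    (hindep : iIndepFun X ℙ)
    (hlaw : ∀ i k, ℙ {ω | X i ω = k} = ENNReal.ofReal (p k))
    (N : Fin K → Ω → ℕ)
    (hN : ∀ k ω, N k ω = (Finset.univ.filter fun i => X i ω = k).card) :
    (∀ lam > (0 : ℝ),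
      ℙ {ω | (∑ k, |(N k ω : ℝ) / n - p k|) ≥ lam}
        ≤ ENNReal.ofReal (2 ^ K * Real.exp (-(n : ℝ) * lam ^ 2 / 2))) ∧
    (∀ δ : ℝ, 0 < δ → δ < 1 →
      ℙ {ω | (∑ k, |(N k ω : ℝ) / n - p k|)
          ≤ Real.sqrt ((2 * K * Real.log 2 + 2 * Real.log (1 / δ)) / n)}
        ≥ ENNReal.ofReal (1 - δ)) := by
  classical
  have hn' : (0 : ℝ) < n := Nat.cast_pos.mpr hn
  set q : Finset (Fin K) → ℝ := fun A => ∑ k ∈ A, p k with hq_def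
  have hq0 : ∀ A, 0 ≤ q A := fun A => Finset.sum_nonneg fun k _ => hp_nonneg k
  have hq1 : ∀ A, q A ≤ 1 := by
    intro A
    rw [← hp_sum]
    exact Finset.sum_le_sum_of_subset_of_nonneg (Finset.subset_univ A)
      fun k _ _ => hp_nonneg k
  -- law of X i on subsets
  have hqA : ∀ (A : Finset (Fin K)) (i : Fin n),
      ℙ {ω | X i ω ∈ A} = ENNReal.ofReal (q A) := by
    intro A i
    have hset : {ω | X i ω ∈ A} = ⋃ k ∈ A, {ω | X i ω = k} := by
      ext ω; simp
    have hd : Set.PairwiseDisjoint (↑A) fun k => {ω | X i ω = k} := by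
      intro k _ k' _ hkk'
      refine Set.disjoint_left.mpr fun ω h h' => hkk' ?_
      simp only [Set.mem_setOf_eq] at h h'
      rw [← h, ← h']
    rw [hset, measure_biUnion_finset hd fun k _ => hmeas i (measurableSet_singleton k)]
    rw [hq_def]
    simp only [hlaw]
    exact (ENNReal.ofReal_sum_of_nonneg fun k _ => hp_nonneg k).symm
  -- counting identity
  have hNA : ∀ (ω : Ω) (A : Finset (Fin K)),
      (∑ k ∈ A, (N k ω : ℝ)) = ∑ i, (if X i ω ∈ A then (1 : ℝ) else 0) := by
    intro ω A
    have h1 : ∀ k, (N k ω : ℝ) = ∑ i, (if X i ω = k then (1 : ℝ) else 0) := by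
      intro k
      rw [hN k ω]
      exact Finset.natCast_card_filter _ _
    simp_rw [h1]
    rw [Finset.sum_comm]
    refine Finset.sum_congr rfl fun i _ => ?_
    rw [Finset.sum_ite_eq A (X i ω) (fun _ => (1 : ℝ))]
  have hNn : ∀ ω, (∑ k, (N k ω : ℝ)) = n := by
    intro ω
    rw [hNA ω Finset.univ]
    simp
  -- Part 1
  have key : ∀ lam > (0 : ℝ),
      ℙ {ω | (∑ k, |(N k ω : ℝ) / n - p k|) ≥ lam}
        ≤ ENNReal.ofReal (2 ^ K * Real.exp (-(n : ℝ) * lam ^ 2 / 2)) := by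
    intro lam hlam
    have hsub : {ω | (∑ k, |(N k ω : ℝ) / n - p k|) ≥ lam}
        ⊆ ⋃ A ∈ (Finset.univ : Finset (Fin K)).powerset,
          {ω | (n : ℝ) * q A + n * lam / 2 ≤ ∑ i, (if X i ω ∈ A then (1 : ℝ) else 0)} := by
      intro ω hω
      simp only [Set.mem_setOf_eq, ge_iff_le] at hω
      set d : Fin K → ℝ := fun k => (N k ω : ℝ) / n - p k with hd_def
      set A : Finset (Fin K) := Finset.univ.filter fun k => 0 ≤ d k with hA_def
      have hd0 : ∑ k, d k = 0 := by
        simp only [hd_def]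
        rw [Finset.sum_sub_distrib, ← Finset.sum_div, hNn ω, hp_sum]
        field_simp
        simp
      have hAd : ∑ k ∈ A, d k = (∑ k, |d k|) / 2 := by
        rw [hA_def, Finset.sum_filter]
        have h2 : ∀ k : Fin K, (if 0 ≤ d k then d k else 0) = (d k + |d k|) / 2 := by
          intro k
          rcases le_or_gt 0 (d k) with h | h
          · rw [if_pos h, abs_of_nonneg h]; ring
          · rw [if_neg (not_le.mpr h), abs_of_neg h]; ring
        simp_rw [h2]
        rw [← Finset.sum_div, Finset.sum_add_distrib, hd0, zero_add]
      refine Set.mem_biUnion (Finset.mem_powerset.mpr (Finset.subset_univ A)) ?_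
      simp only [Set.mem_setOf_eq]
      rw [← hNA ω A]
      have h1 : lam / 2 ≤ ∑ k ∈ A, d k := by rw [hAd]; linarith
      have h2 : ∑ k ∈ A, d k = (∑ k ∈ A, (N k ω : ℝ)) / n - q A := by
        simp only [hd_def, hq_def]
        rw [Finset.sum_sub_distrib, ← Finset.sum_div]
      have h3 : (n : ℝ) * ((∑ k ∈ A, (N k ω : ℝ)) / n) = ∑ k ∈ A, (N k ω : ℝ) :=
        mul_div_cancel₀ _ hn'.ne'
      have h4 := mul_le_mul_of_nonneg_left h1 hn'.le
      rw [h2, mul_sub, h3] at h4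
      linarith
    calc ℙ {ω | (∑ k, |(N k ω : ℝ) / n - p k|) ≥ lam}
        ≤ ℙ (⋃ A ∈ (Finset.univ : Finset (Fin K)).powerset,
            {ω | (n : ℝ) * q A + n * lam / 2
              ≤ ∑ i, (if X i ω ∈ A then (1 : ℝ) else 0)}) := measure_mono hsub
      _ ≤ ∑ A ∈ (Finset.univ : Finset (Fin K)).powerset,
            ℙ {ω | (n : ℝ) * q A + n * lam / 2
              ≤ ∑ i, (if X i ω ∈ A then (1 : ℝ) else 0)} :=
          measure_biUnion_finset_le _ _
      _ ≤ ∑ _A ∈ (Finset.univ : Finset (Fin K)).powerset,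
            ENNReal.ofReal (Real.exp (-(n : ℝ) * lam ^ 2 / 2)) :=
          Finset.sum_le_sum fun A _ =>
            bhc_tail_bound n K (q A) lam (hq0 A) (hq1 A) hlam X hmeas hindep A (hqA A)
      _ = (2 ^ K : ℕ) * ENNReal.ofReal (Real.exp (-(n : ℝ) * lam ^ 2 / 2)) := by
          rw [Finset.sum_const, Finset.card_powerset, Finset.card_univ, Fintype.card_fin,
            nsmul_eq_mul]
      _ = ENNReal.ofReal (2 ^ K * Real.exp (-(n : ℝ) * lam ^ 2 / 2)) := by
          rw [ENNReal.ofReal_mul (by positivity),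
            show ((2 : ℝ) ^ K) = ((2 ^ K : ℕ) : ℝ) by push_cast; ring,
            ENNReal.ofReal_natCast]
  refine ⟨key, ?_⟩
  -- Part 2
  intro δ hδ0 hδ1
  have hlog2 : (0 : ℝ) < Real.log 2 := Real.log_pos one_lt_two
  have hlogδ : 0 < Real.log (1 / δ) := by
    rw [one_div, Real.log_inv]
    linarith [Real.log_neg hδ0 hδ1]
  have hnum : 0 < 2 * K * Real.log 2 + 2 * Real.log (1 / δ) := by
    have : (0 : ℝ) ≤ 2 * K * Real.log 2 := by positivity
    linarith
  set L : ℝ := Real.sqrt ((2 * K * Real.log 2 + 2 * Real.log (1 / δ)) / n) with hL_def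
  have hL : 0 < L := Real.sqrt_pos.mpr (div_pos hnum hn')
  have hL2 : L ^ 2 = (2 * K * Real.log 2 + 2 * Real.log (1 / δ)) / n :=
    Real.sq_sqrt (le_of_lt (div_pos hnum hn'))
  have hδeq : 2 ^ K * Real.exp (-(n : ℝ) * L ^ 2 / 2) = δ := by
    have h1 : -(n : ℝ) * L ^ 2 / 2 = -((K : ℝ) * Real.log 2 + Real.log (1 / δ)) := by
      rw [hL2]; field_simp
    rw [h1, Real.exp_neg, Real.exp_add, Real.exp_nat_mul, Real.exp_log two_pos,
      Real.exp_log (by positivity : (0 : ℝ) < 1 / δ)]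
    rw [one_div]
    field_simp
  have hbound := key L hL
  rw [hδeq] at hbound
  rw [ge_iff_le]
  set B : Set Ω := {ω | (∑ k, |(N k ω : ℝ) / n - p k|) ≤ L} with hB_def
  have hcompl : Bᶜ ⊆ {ω | (∑ k, |(N k ω : ℝ) / n - p k|) ≥ L} := by
    intro ω hω
    simp only [hB_def, Set.mem_compl_iff, Set.mem_setOf_eq, not_le] at hω
    exact le_of_lt hω
  have h1le : (1 : ENNReal) ≤ ℙ B + ENNReal.ofReal δ := by
    calc (1 : ENNReal) = ℙ (B ∪ Bᶜ) := by rw [Set.union_compl_self]; exact measure_univ.symm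
      _ ≤ ℙ B + ℙ Bᶜ := measure_union_le _ _
      _ ≤ ℙ B + ENNReal.ofReal δ :=
          add_le_add le_rfl ((measure_mono hcompl).trans hbound)
  have hsplit : ENNReal.ofReal (1 - δ) + ENNReal.ofReal δ = 1 := by
    rw [← ENNReal.ofReal_add (by linarith) hδ0.le]
    norm_num
  have hfin : ENNReal.ofReal (1 - δ) + ENNReal.ofReal δ ≤ ℙ B + ENNReal.ofReal δ := by
    rw [hsplit]; exact h1le
  exact ENNReal.le_of_add_le_add_right ENNReal.ofReal_ne_top hfin
end

section
/- Fix γ > 0 and a metric ρ on Z with N(γ/2, Z, ρ) < ∞. Suppose a metric learning algorithm A satisfies: for all z_1, z_2 in the training sample s and all z'_1, z'_2 ∈ Z with ρ(z_1, z'_1) ≤ γ and ρ(z_2, z'_2) ≤ γ, |l(A_{p_s}, z_1, z_2) − l(A_{p_s}, z'_1, z'_2)| ≤ ε(p_s). Then A is (N(γ/2, Z, ρ), ε(p_s))-robust. -/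
/-- If a metric learning algorithm has approximately the same loss on pairs of close
examples, then it is (N(γ/2, Z, ρ), ε(p_s))-robust. -/
theorem covering_number_robustness
    {Z F : Type*} [PseudoMetricSpace Z] (n : ℕ)
    (A : (Fin n → Z) → F) (l : F → Z → Z → ℝ)
    (ε : (Fin n → Z) → ℝ) (γ : ℝ) (hγ : 0 < γ) (K : ℕ)
    (hcover : ∃ T : Finset Z, T.card = K ∧ ∀ z : Z, ∃ t ∈ T, dist z t ≤ γ / 2)
    (hmin : ∀ T : Finset Z, (∀ z : Z, ∃ t ∈ T, dist z t ≤ γ / 2) → K ≤ T.card)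
    (hA : ∀ (s : Fin n → Z) (a b : Fin n) (z₁' z₂' : Z),
      dist (s a) z₁' ≤ γ → dist (s b) z₂' ≤ γ →
      |l (A s) (s a) (s b) - l (A s) z₁' z₂'| ≤ ε s) :
    ∃ C : Fin K → Set Z,
      Pairwise (Function.onFun Disjoint C) ∧ (⋃ i, C i) = Set.univ ∧
      ∀ (s : Fin n → Z) (a b : Fin n) (i j : Fin K) (z₁ z₂ : Z),
        s a ∈ C i → z₁ ∈ C i → s b ∈ C j → z₂ ∈ C j →
        |l (A s) (s a) (s b) - l (A s) z₁ z₂| ≤ ε s := by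
  classical
  obtain ⟨T, hT, hcov⟩ := hcover
  have e : T ≃ Fin K := T.equivFin.trans (finCongr hT)
  -- assignment function
  have hchoice : ∀ z : Z, ∃ t : T, dist z (t : Z) ≤ γ / 2 := by
    intro z
    obtain ⟨t, ht, hd⟩ := hcov z
    exact ⟨⟨t, ht⟩, hd⟩
  let f : Z → Fin K := fun z => e (Classical.choose (hchoice z))
  have hf : ∀ z : Z, dist z ((e.symm (f z) : T) : Z) ≤ γ / 2 := by
    intro z
    simpa [f] using Classical.choose_spec (hchoice z)
  refine ⟨fun i => f ⁻¹' {i}, ?_, ?_, ?_⟩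
  · intro i j hij
    simp only [Function.onFun, Set.disjoint_left]
    intro z hz hz'
    exact hij (hz.symm.trans hz')
  · ext z
    simp only [Set.mem_iUnion, Set.mem_preimage, Set.mem_singleton_iff, Set.mem_univ, iff_true]
    exact ⟨f z, rfl⟩
  · intro s a b i j z₁ z₂ hsa hz₁ hsb hz₂
    have h1 : dist (s a) z₁ ≤ γ := by
      calc dist (s a) z₁ ≤ dist (s a) ((e.symm i : T) : Z) + dist ((e.symm i : T) : Z) z₁ :=
            dist_triangle _ _ _
        _ ≤ γ / 2 + γ / 2 := by
            have ha := hf (s a); have hb := hf z₁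
            rw [Set.mem_preimage, Set.mem_singleton_iff] at hsa hz₁
            rw [hsa] at ha; rw [hz₁] at hb
            exact add_le_add ha (by rwa [dist_comm] at hb)
        _ = γ := by ring
    have h2 : dist (s b) z₂ ≤ γ := by
      calc dist (s b) z₂ ≤ dist (s b) ((e.symm j : T) : Z) + dist ((e.symm j : T) : Z) z₂ :=
            dist_triangle _ _ _
        _ ≤ γ / 2 + γ / 2 := by
            have ha := hf (s b); have hb := hf z₂
            rw [Set.mem_preimage, Set.mem_singleton_iff] at hsb hz₂
            rw [hsb] at ha; rw [hz₂] at hb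
            exact add_le_add ha (by rwa [dist_comm] at hb)
        _ = γ := by ring
    exact hA s a b z₁ z₂ h1 h2
end

section
/- Algorithm min_{M ⪰ 0} c‖M‖_F + (1/n²) Σ_{(s_i,s_j)∈p_s} g(y_{ij}[1 − (x_i−x_j)^T M (x_i−x_j)]) is (|Y|·N(γ/2, X, ‖·‖_2), 8URγ g_0/c)-robust: there is a partition of Z = X × Y into |Y|·N(γ/2, X, ‖·‖_2) sets such that for the learned matrix M*, whenever z_1, z'_1 lie in the same set and z_2, z'_2 lie in the same set, the losses of the pairs (z_1,z_2) and (z'_1,z'_2) differ by at most 8URγ g_0/c. -/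
lemma aux_nrm_eq {d : ℕ} (u : Fin d → ℝ) :
    Real.sqrt (∑ i, u i ^ 2) = ‖(WithLp.equiv 2 (Fin d → ℝ)).symm u‖ := by
  rw [EuclideanSpace.norm_eq]
  simp [sq_abs]

lemma aux_tri_add {d : ℕ} (u v : Fin d → ℝ) :
    Real.sqrt (∑ i, (u i + v i) ^ 2) ≤
      Real.sqrt (∑ i, u i ^ 2) + Real.sqrt (∑ i, v i ^ 2) := by
  have h : (WithLp.equiv 2 (Fin d → ℝ)).symm (u + v)
      = (WithLp.equiv 2 (Fin d → ℝ)).symm u + (WithLp.equiv 2 (Fin d → ℝ)).symm v := rfl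
  have hn := aux_nrm_eq (u + v)
  simp only [Pi.add_apply] at hn
  rw [hn, aux_nrm_eq u, aux_nrm_eq v, h]
  exact norm_add_le _ _

lemma aux_tri_sub {d : ℕ} (u v : Fin d → ℝ) :
    Real.sqrt (∑ i, (u i - v i) ^ 2) ≤
      Real.sqrt (∑ i, u i ^ 2) + Real.sqrt (∑ i, v i ^ 2) := by
  have := aux_tri_add u (-v)
  simpa [sub_eq_add_neg] using this

lemma aux_bilin {d : ℕ} (M : Matrix (Fin d) (Fin d) ℝ) (a b : Fin d → ℝ) :
    |∑ i, ∑ j, a i * M i j * b j| ≤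
      Real.sqrt (∑ i, ∑ j, M i j ^ 2) *
        (Real.sqrt (∑ i, a i ^ 2) * Real.sqrt (∑ i, b i ^ 2)) := by
  have key : ∀ N : Matrix (Fin d) (Fin d) ℝ,
      ∑ i, ∑ j, a i * N i j * b j ≤
      Real.sqrt (∑ i, ∑ j, N i j ^ 2) *
        (Real.sqrt (∑ i, a i ^ 2) * Real.sqrt (∑ i, b i ^ 2)) := by
    intro N
    have h1 : ∑ i, ∑ j, a i * N i j * b j
        = ∑ p : Fin d × Fin d, (a p.1 * b p.2) * N p.1 p.2 := by
      rw [Fintype.sum_prod_type]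
      exact Finset.sum_congr rfl fun i _ => Finset.sum_congr rfl fun j _ => by ring
    have h2 := Real.sum_mul_le_sqrt_mul_sqrt Finset.univ
        (fun p : Fin d × Fin d => a p.1 * b p.2) (fun p => N p.1 p.2)
    have h3 : ∑ p : Fin d × Fin d, (a p.1 * b p.2) ^ 2
        = (∑ i, a i ^ 2) * (∑ i, b i ^ 2) := by
      rw [Finset.sum_mul_sum, Fintype.sum_prod_type]
      exact Finset.sum_congr rfl fun i _ => Finset.sum_congr rfl fun j _ => by ring
    have h4 : ∑ p : Fin d × Fin d, N p.1 p.2 ^ 2 = ∑ i, ∑ j, N i j ^ 2 := by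
      rw [Fintype.sum_prod_type]
    rw [h1]
    calc ∑ p : Fin d × Fin d, (a p.1 * b p.2) * N p.1 p.2
        ≤ Real.sqrt (∑ p : Fin d × Fin d, (a p.1 * b p.2) ^ 2) *
          Real.sqrt (∑ p : Fin d × Fin d, N p.1 p.2 ^ 2) := h2
      _ = Real.sqrt (∑ i, ∑ j, N i j ^ 2) *
          (Real.sqrt (∑ i, a i ^ 2) * Real.sqrt (∑ i, b i ^ 2)) := by
          rw [h3, h4, Real.sqrt_mul (Finset.sum_nonneg fun i _ => sq_nonneg _)]
          ring
  refine abs_le.2 ⟨?_, key M⟩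
  have := key (-M)
  simp only [Matrix.neg_apply, mul_neg, neg_mul, Finset.sum_neg_distrib, neg_sq] at this
  linarith

lemma aux_quad_diff {d : ℕ} (M : Matrix (Fin d) (Fin d) ℝ) (u v : Fin d → ℝ) :
    |(∑ i, ∑ j, u i * M i j * u j) - ∑ i, ∑ j, v i * M i j * v j| ≤
      Real.sqrt (∑ i, ∑ j, M i j ^ 2) *
        ((Real.sqrt (∑ i, u i ^ 2) + Real.sqrt (∑ i, v i ^ 2)) *
          Real.sqrt (∑ i, (u i - v i) ^ 2)) := by
  have h1 := aux_bilin M u (fun i => u i - v i)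
  have h2 := aux_bilin M (fun i => u i - v i) v
  have split : (∑ i, ∑ j, u i * M i j * u j) - ∑ i, ∑ j, v i * M i j * v j
      = (∑ i, ∑ j, u i * M i j * (u j - v j)) + ∑ i, ∑ j, (u i - v i) * M i j * v j := by
    rw [← Finset.sum_sub_distrib, ← Finset.sum_add_distrib]
    refine Finset.sum_congr rfl fun i _ => ?_
    rw [← Finset.sum_sub_distrib, ← Finset.sum_add_distrib]
    exact Finset.sum_congr rfl fun j _ => by ring
  rw [split]
  refine (abs_add_le _ _).trans ?_
  have e1 : (∑ i, ∑ j, u i * M i j * (u j - v j))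
      ≤ |∑ i, ∑ j, u i * M i j * (u j - v j)| := le_abs_self _
  have e2 : (∑ i, ∑ j, (u i - v i) * M i j * v j)
      ≤ |∑ i, ∑ j, (u i - v i) * M i j * v j| := le_abs_self _
  nlinarith [h1, h2]

/-- The Frobenius-norm regularized Mahalanobis metric learning algorithm is
(|Y|·N(γ/2, X, ‖·‖₂), 8URγg₀/c)-robust. -/
theorem frobenius_algorithm_robust
    (d n : ℕ) {Y : Type*} [Fintype Y] [DecidableEq Y]
    (X : Set (Fin d → ℝ)) (hXcompact : IsCompact X)
    (R : ℝ) (hR : ∀ x ∈ X, Real.sqrt (∑ i, (x i) ^ 2) ≤ R)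
    (g : ℝ → ℝ) (U : ℝ) (hU : 0 ≤ U) (hg : ∀ t, 0 ≤ g t)
    (hLip : ∀ a b : ℝ, |g a - g b| ≤ U * |a - b|)
    (c γ : ℝ) (hc : 0 < c) (hγ : 0 < γ)
    (Ncov : ℕ)
    (hcov : ∃ T : Finset (Fin d → ℝ), ↑T ⊆ X ∧ T.card = Ncov ∧
      ∀ x ∈ X, ∃ t ∈ T, Real.sqrt (∑ i, (x i - t i) ^ 2) ≤ γ / 2)
    (hmin : ∀ T : Finset (Fin d → ℝ), ↑T ⊆ X →
      (∀ x ∈ X, ∃ t ∈ T, Real.sqrt (∑ i, (x i - t i) ^ 2) ≤ γ / 2) → Ncov ≤ T.card)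
    (s : Fin n → (Fin d → ℝ) × Y) (hs : ∀ a, (s a).1 ∈ X)
    (g0 : ℝ) (hg0 : ∀ y y' : Y, g (if y = y' then (1 : ℝ) else -1) ≤ g0)
    (obj : Matrix (Fin d) (Fin d) ℝ → ℝ)
    (hobj : ∀ M, obj M = c * Real.sqrt (∑ i : Fin d, ∑ j : Fin d, (M i j) ^ 2) +
      (1 / (n : ℝ) ^ 2) * ∑ a : Fin n, ∑ b : Fin n,
        g ((if (s a).2 = (s b).2 then (1 : ℝ) else -1) *
          (1 - ∑ i : Fin d, ∑ j : Fin d,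
            ((s a).1 i - (s b).1 i) * M i j * ((s a).1 j - (s b).1 j))))
    (Mstar : Matrix (Fin d) (Fin d) ℝ) (hpsd : Mstar.PosSemidef)
    (hopt : ∀ M : Matrix (Fin d) (Fin d) ℝ, M.PosSemidef → obj Mstar ≤ obj M) :
    ∃ C : Fin (Fintype.card Y * Ncov) → Set ((Fin d → ℝ) × Y),
      Pairwise (Function.onFun Disjoint C) ∧
      (X ×ˢ (Set.univ : Set Y)) ⊆ ⋃ i, C i ∧
      ∀ (a b : Fin n) (i j : Fin (Fintype.card Y * Ncov))
        (z₁ z₂ : (Fin d → ℝ) × Y),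
        s a ∈ C i → z₁ ∈ C i → s b ∈ C j → z₂ ∈ C j →
        |g ((if (s a).2 = (s b).2 then (1 : ℝ) else -1) *
            (1 - ∑ i' : Fin d, ∑ j' : Fin d,
              ((s a).1 i' - (s b).1 i') * Mstar i' j' * ((s a).1 j' - (s b).1 j'))) -
         g ((if z₁.2 = z₂.2 then (1 : ℝ) else -1) *
            (1 - ∑ i' : Fin d, ∑ j' : Fin d,
              (z₁.1 i' - z₂.1 i') * Mstar i' j' * (z₁.1 j' - z₂.1 j')))|
          ≤ 8 * U * R * γ * g0 / c := by
  obtain ⟨T, hTX, hTcard, hTcov⟩ := hcov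
  have ecard : Fintype.card (Y × Fin Ncov) = Fintype.card Y * Ncov := by simp
  let e : (Y × Fin Ncov) ≃ Fin (Fintype.card Y * Ncov) := Fintype.equivFinOfCardEq ecard
  have ιcard : Fintype.card {x // x ∈ T} = Ncov := by rw [Fintype.card_coe, hTcard]
  let ι : {x // x ∈ T} ≃ Fin Ncov := Fintype.equivFinOfCardEq ιcard
  let f : ∀ (x : Fin d → ℝ), x ∈ X → Y → Fin (Fintype.card Y * Ncov) :=
    fun x h y => e (y, ι ⟨(hTcov x h).choose, (hTcov x h).choose_spec.1⟩)
  refine ⟨fun i => {z | ∃ h : z.1 ∈ X, f z.1 h z.2 = i}, ?_, ?_, ?_⟩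
  · intro i j hij
    rw [Function.onFun, Set.disjoint_left]
    rintro z ⟨h, hf⟩ ⟨h', hf'⟩
    exact hij (hf.symm.trans hf')
  · rintro z hz
    obtain ⟨hzX, -⟩ := hz
    exact Set.mem_iUnion.2 ⟨f z.1 hzX z.2, hzX, rfl⟩
  · intro a b i j z₁ z₂ hai hz1 hbj hz2
    -- same-cell facts
    have same : ∀ (k : Fin (Fintype.card Y * Ncov)) (z z' : (Fin d → ℝ) × Y),
        (∃ h : z.1 ∈ X, f z.1 h z.2 = k) → (∃ h' : z'.1 ∈ X, f z'.1 h' z'.2 = k) →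
        z.2 = z'.2 ∧ Real.sqrt (∑ m, (z.1 m - z'.1 m) ^ 2) ≤ γ := by
      rintro k z z' ⟨h, hf⟩ ⟨h', hf'⟩
      have hee : ((z.2, ι ⟨(hTcov z.1 h).choose, (hTcov z.1 h).choose_spec.1⟩) :
          Y × Fin Ncov) = (z'.2, ι ⟨(hTcov z'.1 h').choose, (hTcov z'.1 h').choose_spec.1⟩) :=
        e.injective (hf.trans hf'.symm)
      have hy : z.2 = z'.2 := congrArg Prod.fst hee
      have ht : (hTcov z.1 h).choose = (hTcov z'.1 h').choose :=
        congrArg Subtype.val (ι.injective (congrArg Prod.snd hee))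
      refine ⟨hy, ?_⟩
      have p1 := (hTcov z.1 h).choose_spec.2
      have p2 := (hTcov z'.1 h').choose_spec.2
      rw [← ht] at p2
      set t := (hTcov z.1 h).choose with hT
      have tri := aux_tri_add (fun m => z.1 m - t m) (fun m => t m - z'.1 m)
      simp only [sub_add_sub_cancel] at tri
      have flip : ∑ m, (t m - z'.1 m) ^ 2 = ∑ m, (z'.1 m - t m) ^ 2 :=
        Finset.sum_congr rfl fun m _ => by ring
      rw [flip] at tri
      linarith
    obtain ⟨hy1, hd1⟩ := same i (s a) z₁ hai hz1
    obtain ⟨hy2, hd2⟩ := same j (s b) z₂ hbj hz2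
    obtain ⟨hX1, -⟩ := hz1
    obtain ⟨hX2, -⟩ := hz2
    -- basic nonnegativity
    have hR0 : (0 : ℝ) ≤ R := le_trans (Real.sqrt_nonneg _) (hR _ (hs a))
    have hg00 : (0 : ℝ) ≤ g0 := le_trans (hg _) (hg0 (s a).2 (s a).2)
    -- Frobenius norm bound
    have hMF : Real.sqrt (∑ i', ∑ j', Mstar i' j' ^ 2) ≤ g0 / c := by
      have h0 := hopt 0 (Matrix.PosSemidef.zero)
      rw [hobj, hobj] at h0
      simp only [Matrix.zero_apply, mul_zero, zero_mul, Finset.sum_const_zero, sub_zero,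
        mul_one, Real.sqrt_zero, ne_eq, zero_pow, OfNat.ofNat_ne_zero,
        not_false_eq_true, add_zero, zero_add] at h0
      have hsum : ∑ a' : Fin n, ∑ b' : Fin n,
          g (if (s a').2 = (s b').2 then (1 : ℝ) else -1) ≤ (n : ℝ) ^ 2 * g0 := by
        calc ∑ a' : Fin n, ∑ b' : Fin n, g (if (s a').2 = (s b').2 then (1 : ℝ) else -1)
            ≤ ∑ _a' : Fin n, ∑ _b' : Fin n, g0 :=
              Finset.sum_le_sum fun a' _ => Finset.sum_le_sum fun b' _ => hg0 _ _
          _ = (n : ℝ) ^ 2 * g0 := by simp [Finset.sum_const]; ring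
      have hn : (0 : ℝ) < (n : ℝ) ^ 2 := by
        have : 0 < n := Fin.pos a
        positivity
      have hloss : 0 ≤ (1 / (n : ℝ) ^ 2) * ∑ a' : Fin n, ∑ b' : Fin n,
          g ((if (s a').2 = (s b').2 then (1 : ℝ) else -1) *
            (1 - ∑ i' : Fin d, ∑ j' : Fin d,
              ((s a').1 i' - (s b').1 i') * Mstar i' j' * ((s a').1 j' - (s b').1 j'))) := by
        apply mul_nonneg (by positivity)
        exact Finset.sum_nonneg fun _ _ => Finset.sum_nonneg fun _ _ => hg _
      have hobj0 : (1 / (n : ℝ) ^ 2) * ∑ a' : Fin n, ∑ b' : Fin n,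
          g (if (s a').2 = (s b').2 then (1 : ℝ) else -1) ≤ g0 := by
        rw [div_mul_eq_mul_div, one_mul, div_le_iff₀ hn]
        linarith [hsum]
      have hcF : c * Real.sqrt (∑ i', ∑ j', Mstar i' j' ^ 2) ≤ g0 := by linarith
      rw [le_div_iff₀ hc]
      linarith [hcF]
    -- distance bounds
    have hu : Real.sqrt (∑ m, ((s a).1 m - (s b).1 m) ^ 2) ≤ 2 * R := by
      have := aux_tri_sub (s a).1 (s b).1
      have h1 := hR _ (hs a); have h2 := hR _ (hs b)
      linarith
    have hv : Real.sqrt (∑ m, (z₁.1 m - z₂.1 m) ^ 2) ≤ 2 * R := by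
      have := aux_tri_sub z₁.1 z₂.1
      have h1 := hR _ hX1; have h2 := hR _ hX2
      linarith
    have huv : Real.sqrt (∑ m, (((s a).1 m - (s b).1 m) - (z₁.1 m - z₂.1 m)) ^ 2)
        ≤ 2 * γ := by
      have tri := aux_tri_sub (fun m => (s a).1 m - z₁.1 m) (fun m => (s b).1 m - z₂.1 m)
      have eq1 : ∑ m, (((s a).1 m - z₁.1 m) - ((s b).1 m - z₂.1 m)) ^ 2
          = ∑ m, (((s a).1 m - (s b).1 m) - (z₁.1 m - z₂.1 m)) ^ 2 :=
        Finset.sum_congr rfl fun m _ => by ring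
      rw [eq1] at tri
      linarith
    -- quadratic form bound
    have hqd := aux_quad_diff Mstar (fun m => (s a).1 m - (s b).1 m)
      (fun m => z₁.1 m - z₂.1 m)
    have sF := Real.sqrt_nonneg (∑ i', ∑ j', Mstar i' j' ^ 2)
    have su := Real.sqrt_nonneg (∑ m, ((s a).1 m - (s b).1 m) ^ 2)
    have sv := Real.sqrt_nonneg (∑ m, (z₁.1 m - z₂.1 m) ^ 2)
    have suv := Real.sqrt_nonneg (∑ m, (((s a).1 m - (s b).1 m) - (z₁.1 m - z₂.1 m)) ^ 2)
    have hq : |(∑ i', ∑ j', ((s a).1 i' - (s b).1 i') * Mstar i' j' *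
          ((s a).1 j' - (s b).1 j')) -
        ∑ i', ∑ j', (z₁.1 i' - z₂.1 i') * Mstar i' j' * (z₁.1 j' - z₂.1 j')|
        ≤ 8 * R * γ * g0 / c := by
      refine hqd.trans ?_
      have key : Real.sqrt (∑ i', ∑ j', Mstar i' j' ^ 2) *
          ((Real.sqrt (∑ m, ((s a).1 m - (s b).1 m) ^ 2) +
            Real.sqrt (∑ m, (z₁.1 m - z₂.1 m) ^ 2)) *
          Real.sqrt (∑ m, (((s a).1 m - (s b).1 m) - (z₁.1 m - z₂.1 m)) ^ 2))
          ≤ (g0 / c) * ((2 * R + 2 * R) * (2 * γ)) := by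
        have hgc : 0 ≤ g0 / c := by positivity
        refine mul_le_mul hMF ?_ (by positivity) hgc
        refine mul_le_mul (by linarith) huv suv (by linarith)
      refine key.trans (le_of_eq ?_)
      field_simp
      ring
    -- labels agree
    rw [← hy1, ← hy2]
    have harg : |((if (s a).2 = (s b).2 then (1 : ℝ) else -1) *
          (1 - ∑ i' : Fin d, ∑ j' : Fin d,
            ((s a).1 i' - (s b).1 i') * Mstar i' j' * ((s a).1 j' - (s b).1 j'))) -
        ((if (s a).2 = (s b).2 then (1 : ℝ) else -1) *
          (1 - ∑ i' : Fin d, ∑ j' : Fin d,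
            (z₁.1 i' - z₂.1 i') * Mstar i' j' * (z₁.1 j' - z₂.1 j')))|
        ≤ 8 * R * γ * g0 / c := by
      by_cases hyy : (s a).2 = (s b).2 <;> simp only [hyy, if_pos, if_true, if_neg, if_false]
      · rw [one_mul, one_mul]
        calc |(1 - _) - (1 - _)| = |_| := by rw [abs_sub_comm]; congr 1; ring
          _ ≤ _ := hq
      · simp only [neg_one_mul]
        calc |-(1 - _) - -(1 - _)| = |_| := by congr 1; ring
          _ ≤ _ := hq
    refine (hLip _ _).trans ?_
    calc U * |_| ≤ U * (8 * R * γ * g0 / c) := mul_le_mul_of_nonneg_left harg hU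
      _ = 8 * U * R * γ * g0 / c := by field_simp
end

section
/- Consider the algorithm min_{M ⪰ 0} c‖M‖_{2,1} + (1/n²) Σ_{(s_i,s_j)∈p_s} g(y_{ij}[1 − (x_i−x_j)^T M (x_i−x_j)]) with ‖M‖_{2,1} = Σ_i ‖m^i‖_2 the sum of column Euclidean norms. This algorithm is (|Y|·N(γ/2, X, ‖·‖_2), 8URγ g_0/c)-robust. -/
open Finset

lemma sqrt_sum_le_sum_sqrt {ι : Type*} [DecidableEq ι] (s : Finset ι) (f : ι → ℝ)
    (hf : ∀ i ∈ s, 0 ≤ f i) :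
    Real.sqrt (∑ i ∈ s, f i) ≤ ∑ i ∈ s, Real.sqrt (f i) := by
  induction s using Finset.induction with
  | empty => simp
  | insert a t hx ih =>
    rw [Finset.sum_insert hx, Finset.sum_insert hx]
    have h1 : Real.sqrt (f a + ∑ i ∈ t, f i) ≤ Real.sqrt (f a) + Real.sqrt (∑ i ∈ t, f i) := by
      have hfa : 0 ≤ f a := hf a (Finset.mem_insert_self _ _)
      have hts : 0 ≤ ∑ i ∈ t, f i := Finset.sum_nonneg fun i hi => hf i (Finset.mem_insert_of_mem hi)
      have : f a + ∑ i ∈ t, f i ≤ (Real.sqrt (f a) + Real.sqrt (∑ i ∈ t, f i)) ^ 2 := by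
        rw [add_sq, Real.sq_sqrt hfa, Real.sq_sqrt hts]
        nlinarith [Real.sqrt_nonneg (f a), Real.sqrt_nonneg (∑ i ∈ t, f i)]
      calc Real.sqrt (f a + ∑ i ∈ t, f i)
          ≤ Real.sqrt ((Real.sqrt (f a) + Real.sqrt (∑ i ∈ t, f i))^2) := Real.sqrt_le_sqrt this
        _ = _ := Real.sqrt_sq (by positivity)
    exact h1.trans (by gcongr; exact ih fun i hi => hf i (Finset.mem_insert_of_mem hi))

lemma bilin_bound {d : ℕ} (M : Matrix (Fin d) (Fin d) ℝ) (a b : Fin d → ℝ) :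
    |∑ i : Fin d, ∑ j : Fin d, a i * M i j * b j| ≤
      Real.sqrt (∑ i : Fin d, ∑ j : Fin d, (M i j)^2) *
        (Real.sqrt (∑ i, (a i)^2) * Real.sqrt (∑ i, (b i)^2)) := by
  have key : (∑ i : Fin d, ∑ j : Fin d, a i * M i j * b j)^2 ≤
      (∑ i : Fin d, ∑ j : Fin d, (M i j)^2) * ((∑ i, (a i)^2) * (∑ i, (b i)^2)) := by
    have h1 : (∑ i : Fin d, a i * (∑ j, M i j * b j))^2 ≤
        (∑ i, (a i)^2) * (∑ i : Fin d, (∑ j, M i j * b j)^2) :=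
      Finset.sum_mul_sq_le_sq_mul_sq _ _ _
    have h2 : ∀ i : Fin d, (∑ j, M i j * b j)^2 ≤ (∑ j, (M i j)^2) * (∑ j, (b j)^2) :=
      fun i => Finset.sum_mul_sq_le_sq_mul_sq _ _ _
    have h3 : (∑ i : Fin d, (∑ j, M i j * b j)^2)
        ≤ (∑ i : Fin d, ∑ j, (M i j)^2) * (∑ j, (b j)^2) := by
      rw [Finset.sum_mul]
      exact Finset.sum_le_sum fun i _ => h2 i
    have heq : (∑ i : Fin d, ∑ j : Fin d, a i * M i j * b j)
        = ∑ i : Fin d, a i * (∑ j, M i j * b j) := by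
      congr 1; ext i; rw [Finset.mul_sum]; congr 1; ext j; ring
    rw [heq]
    calc (∑ i : Fin d, a i * (∑ j, M i j * b j))^2
        ≤ (∑ i, (a i)^2) * (∑ i : Fin d, (∑ j, M i j * b j)^2) := h1
      _ ≤ (∑ i, (a i)^2) * ((∑ i : Fin d, ∑ j, (M i j)^2) * (∑ j, (b j)^2)) := by
          apply mul_le_mul_of_nonneg_left h3 (by positivity)
      _ = (∑ i : Fin d, ∑ j : Fin d, (M i j)^2) * ((∑ i, (a i)^2) * (∑ i, (b i)^2)) := by ring
  have h := Real.sqrt_le_sqrt key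
  rw [Real.sqrt_sq_eq_abs] at h
  refine h.trans ?_
  rw [Real.sqrt_mul (by positivity), Real.sqrt_mul (by positivity)]

lemma tri_sub {d : ℕ} (x y : Fin d → ℝ) :
    Real.sqrt (∑ i, (x i - y i)^2) ≤
      Real.sqrt (∑ i, (x i)^2) + Real.sqrt (∑ i, (y i)^2) := by
  have hA : (0:ℝ) ≤ ∑ i, (x i)^2 := by positivity
  have hB : (0:ℝ) ≤ ∑ i, (y i)^2 := by positivity
  have hCS : (∑ i, x i * y i)^2 ≤ (∑ i, (x i)^2) * (∑ i, (y i)^2) :=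
    Finset.sum_mul_sq_le_sq_mul_sq _ _ _
  have hxy : |∑ i, x i * y i| ≤ Real.sqrt (∑ i, (x i)^2) * Real.sqrt (∑ i, (y i)^2) := by
    calc |∑ i, x i * y i| = Real.sqrt ((∑ i, x i * y i)^2) := (Real.sqrt_sq_eq_abs _).symm
      _ ≤ Real.sqrt ((∑ i, (x i)^2) * (∑ i, (y i)^2)) := Real.sqrt_le_sqrt hCS
      _ = _ := Real.sqrt_mul hA _
  have key : ∑ i, (x i - y i)^2 ≤
      (Real.sqrt (∑ i, (x i)^2) + Real.sqrt (∑ i, (y i)^2))^2 := by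
    have hexp : ∑ i, (x i - y i)^2 = (∑ i, (x i)^2) - 2 * (∑ i, x i * y i) + ∑ i, (y i)^2 := by
      rw [Finset.mul_sum, ← Finset.sum_sub_distrib, ← Finset.sum_add_distrib]
      congr 1; ext i; ring
    rw [hexp, add_sq, Real.sq_sqrt hA, Real.sq_sqrt hB]
    have := abs_le.mp hxy
    nlinarith [this.1, this.2]
  calc Real.sqrt (∑ i, (x i - y i)^2)
      ≤ Real.sqrt ((Real.sqrt (∑ i, (x i)^2) + Real.sqrt (∑ i, (y i)^2))^2) :=
        Real.sqrt_le_sqrt key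
    _ = _ := Real.sqrt_sq (by positivity)

lemma tri_three {d : ℕ} (p q r : Fin d → ℝ) :
    Real.sqrt (∑ i, (p i - r i)^2) ≤
      Real.sqrt (∑ i, (p i - q i)^2) + Real.sqrt (∑ i, (q i - r i)^2) := by
  have h := tri_sub (fun i => p i - q i) (fun i => r i - q i)
  have e1 : ∑ i, ((fun i => p i - q i) i - (fun i => r i - q i) i)^2 = ∑ i, (p i - r i)^2 := by
    congr 1; ext i; ring
  have e2 : (∑ i, ((fun i => r i - q i) i)^2) = ∑ i, (q i - r i)^2 := by
    congr 1; ext i; ring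
  rw [e1, e2] at h
  exact h

/-- The ℓ_{2,1}-norm regularized Mahalanobis metric learning algorithm is
(|Y|·N(γ/2, X, ‖·‖₂), 8URγg₀/c)-robust. -/
theorem l21_algorithm_robust
    (d n : ℕ) {Y : Type*} [Fintype Y] [DecidableEq Y]
    (X : Set (Fin d → ℝ)) (hXcompact : IsCompact X)
    (R : ℝ) (hR : ∀ x ∈ X, Real.sqrt (∑ i, (x i) ^ 2) ≤ R)
    (g : ℝ → ℝ) (U : ℝ) (hU : 0 ≤ U) (hg : ∀ t, 0 ≤ g t)
    (hLip : ∀ a b : ℝ, |g a - g b| ≤ U * |a - b|)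
    (c γ : ℝ) (hc : 0 < c) (hγ : 0 < γ)
    (Ncov : ℕ)
    (hcov : ∃ T : Finset (Fin d → ℝ), ↑T ⊆ X ∧ T.card = Ncov ∧
      ∀ x ∈ X, ∃ t ∈ T, Real.sqrt (∑ i, (x i - t i) ^ 2) ≤ γ / 2)
    (hmin : ∀ T : Finset (Fin d → ℝ), ↑T ⊆ X →
      (∀ x ∈ X, ∃ t ∈ T, Real.sqrt (∑ i, (x i - t i) ^ 2) ≤ γ / 2) → Ncov ≤ T.card)
    (s : Fin n → (Fin d → ℝ) × Y) (hs : ∀ a, (s a).1 ∈ X)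
    (g0 : ℝ) (hg0 : ∀ y y' : Y, g (if y = y' then (1 : ℝ) else -1) ≤ g0)
    (obj : Matrix (Fin d) (Fin d) ℝ → ℝ)
    (hobj : ∀ M, obj M = c * ∑ j : Fin d, Real.sqrt (∑ i : Fin d, (M i j) ^ 2) +
      (1 / (n : ℝ) ^ 2) * ∑ a : Fin n, ∑ b : Fin n,
        g ((if (s a).2 = (s b).2 then (1 : ℝ) else -1) *
          (1 - ∑ i : Fin d, ∑ j : Fin d,
            ((s a).1 i - (s b).1 i) * M i j * ((s a).1 j - (s b).1 j))))
    (Mstar : Matrix (Fin d) (Fin d) ℝ) (hpsd : Mstar.PosSemidef)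
    (hopt : ∀ M : Matrix (Fin d) (Fin d) ℝ, M.PosSemidef → obj Mstar ≤ obj M) :
    ∃ C : Fin (Fintype.card Y * Ncov) → Set ((Fin d → ℝ) × Y),
      Pairwise (Function.onFun Disjoint C) ∧
      (X ×ˢ (Set.univ : Set Y)) ⊆ ⋃ i, C i ∧
      ∀ (a b : Fin n) (i j : Fin (Fintype.card Y * Ncov))
        (z₁ z₂ : (Fin d → ℝ) × Y),
        s a ∈ C i → z₁ ∈ C i → s b ∈ C j → z₂ ∈ C j →
        |g ((if (s a).2 = (s b).2 then (1 : ℝ) else -1) *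
            (1 - ∑ i' : Fin d, ∑ j' : Fin d,
              ((s a).1 i' - (s b).1 i') * Mstar i' j' * ((s a).1 j' - (s b).1 j'))) -
         g ((if z₁.2 = z₂.2 then (1 : ℝ) else -1) *
            (1 - ∑ i' : Fin d, ∑ j' : Fin d,
              (z₁.1 i' - z₂.1 i') * Mstar i' j' * (z₁.1 j' - z₂.1 j')))|
          ≤ 8 * U * R * γ * g0 / c := by
  classical
  obtain ⟨T, hTX, hTcard, hTcov⟩ := hcov
  by_cases hzero : Fintype.card Y * Ncov = 0
  · refine ⟨fun _ => ∅, ?_, ?_, ?_⟩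
    · intro i j _; simp [Function.onFun]
    · rintro ⟨x, y⟩ ⟨hx, -⟩
      exfalso
      rcases Nat.mul_eq_zero.mp hzero with hY | hN
      · exact (Fintype.card_eq_zero_iff.mp hY).false y
      · have : T = ∅ := Finset.card_eq_zero.mp (hTcard.trans hN)
        obtain ⟨t, ht, -⟩ := hTcov x hx
        simp [this] at ht
    · intro a b i j z₁ z₂ ha _ _ _; exact absurd ha (Set.notMem_empty _)
  -- main case
  have hYcard : Fintype.card Y ≠ 0 := fun h => hzero (by simp [h])
  have hNcov : Ncov ≠ 0 := fun h => hzero (by simp [h])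
  have hYne : Nonempty Y := Fintype.card_pos_iff.mp (Nat.pos_of_ne_zero hYcard)
  have hTne : T.Nonempty := by
    rw [← Finset.card_pos, hTcard]; exact Nat.pos_of_ne_zero hNcov
  -- selection function
  have hex : ∀ x : Fin d → ℝ, ∃ t : {u // u ∈ T},
      x ∈ X → Real.sqrt (∑ i, (x i - t.1 i) ^ 2) ≤ γ / 2 := by
    intro x
    by_cases hx : x ∈ X
    · obtain ⟨t, ht, hd⟩ := hTcov x hx
      exact ⟨⟨t, ht⟩, fun _ => hd⟩
    · exact ⟨⟨hTne.choose, hTne.choose_spec⟩, fun h => absurd h hx⟩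
  choose F hF using hex
  -- index equivalence
  let φ : Y × {u // u ∈ T} ≃ Fin (Fintype.card Y * Ncov) :=
    ((Fintype.equivFin Y).prodCongr (T.equivFin.trans (finCongr hTcard))).trans finProdFinEquiv
  refine ⟨fun k => {z | z.1 ∈ X ∧ φ (z.2, F z.1) = k}, ?_, ?_, ?_⟩
  · intro i j hij
    simp only [Function.onFun, Set.disjoint_left]
    rintro z ⟨-, h1⟩ ⟨-, h2⟩
    exact hij (h1 ▸ h2 ▸ rfl)
  · rintro ⟨x, y⟩ ⟨hx, -⟩
    exact Set.mem_iUnion.2 ⟨φ (y, F x), hx, rfl⟩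
  · intro a b i j z₁ z₂ ha hz1 hb hz2
    obtain ⟨haX, hai⟩ := ha
    obtain ⟨h1X, h1i⟩ := hz1
    obtain ⟨hbX, hbj⟩ := hb
    obtain ⟨h2X, h2j⟩ := hz2
    have hpa : ((s a).2, F (s a).1) = (z₁.2, F z₁.1) := φ.injective (by rw [hai, ← h1i])
    have hpb : ((s b).2, F (s b).1) = (z₂.2, F z₂.1) := φ.injective (by rw [hbj, ← h2j])
    have hy1 : (s a).2 = z₁.2 := congrArg Prod.fst hpa
    have hy2 : (s b).2 = z₂.2 := congrArg Prod.fst hpb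
    have hFa : F (s a).1 = F z₁.1 := congrArg Prod.snd hpa
    have hFb : F (s b).1 = F z₂.1 := congrArg Prod.snd hpb
    -- distances within cells
    have hda : Real.sqrt (∑ i, ((s a).1 i - (F (s a).1).1 i) ^ 2) ≤ γ / 2 := hF _ haX
    have hdb : Real.sqrt (∑ i, ((s b).1 i - (F (s b).1).1 i) ^ 2) ≤ γ / 2 := hF _ hbX
    have hd1 : Real.sqrt (∑ i, (z₁.1 i - (F (s a).1).1 i) ^ 2) ≤ γ / 2 := by
      rw [hFa]; exact hF _ h1X
    have hd2 : Real.sqrt (∑ i, (z₂.1 i - (F (s b).1).1 i) ^ 2) ≤ γ / 2 := by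
      rw [hFb]; exact hF _ h2X
    have hdist1 : Real.sqrt (∑ i, ((s a).1 i - z₁.1 i) ^ 2) ≤ γ := by
      have htri := tri_three (s a).1 ((F (s a).1).1) z₁.1
      have : Real.sqrt (∑ i, ((F (s a).1).1 i - z₁.1 i) ^ 2)
          = Real.sqrt (∑ i, (z₁.1 i - (F (s a).1).1 i) ^ 2) := by
        congr 1; congr 1; ext i; ring
      rw [this] at htri
      linarith
    have hdist2 : Real.sqrt (∑ i, ((s b).1 i - z₂.1 i) ^ 2) ≤ γ := by
      have htri := tri_three (s b).1 ((F (s b).1).1) z₂.1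
      have : Real.sqrt (∑ i, ((F (s b).1).1 i - z₂.1 i) ^ 2)
          = Real.sqrt (∑ i, (z₂.1 i - (F (s b).1).1 i) ^ 2) := by
        congr 1; congr 1; ext i; ring
      rw [this] at htri
      linarith
    -- Frobenius norm bound from optimality
    have hg0nn : (0:ℝ) ≤ g0 := le_trans (hg _) (hg0 hYne.some hYne.some)
    have hFrob : Real.sqrt (∑ i : Fin d, ∑ j : Fin d, (Mstar i j) ^ 2) ≤ g0 / c := by
      have hobj0 := hopt 0 Matrix.PosSemidef.zero
      rw [hobj, hobj] at hobj0
      simp only [Matrix.zero_apply, ne_eq, OfNat.ofNat_ne_zero, not_false_eq_true,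
        zero_pow, mul_zero, zero_mul, Finset.sum_const_zero,
        Real.sqrt_zero, sub_zero, mul_one, zero_add, add_zero] at hobj0
      have hL : (0:ℝ) ≤ (1 / (n : ℝ) ^ 2) * ∑ a : Fin n, ∑ b : Fin n,
          g ((if (s a).2 = (s b).2 then (1 : ℝ) else -1) *
            (1 - ∑ i : Fin d, ∑ j : Fin d,
              ((s a).1 i - (s b).1 i) * Mstar i j * ((s a).1 j - (s b).1 j))) := by
        apply mul_nonneg (by positivity)
        exact Finset.sum_nonneg fun _ _ => Finset.sum_nonneg fun _ _ => hg _
      have hRHS : (1 / (n : ℝ) ^ 2) * ∑ a : Fin n, ∑ b : Fin n,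
          g (if (s a).2 = (s b).2 then (1:ℝ) else -1) ≤ g0 := by
        rcases Nat.eq_zero_or_pos n with hn | hn
        · subst hn; simp [hg0nn]
        · have hsum : ∑ a : Fin n, ∑ b : Fin n, g (if (s a).2 = (s b).2 then (1:ℝ) else -1)
              ≤ ∑ _a : Fin n, ∑ _b : Fin n, g0 :=
            Finset.sum_le_sum fun _ _ => Finset.sum_le_sum fun _ _ => hg0 _ _
          have hn' : (0:ℝ) < (n : ℝ) ^ 2 := by positivity
          calc (1 / (n : ℝ) ^ 2) * ∑ a : Fin n, ∑ b : Fin n,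
                g (if (s a).2 = (s b).2 then (1:ℝ) else -1)
              ≤ (1 / (n : ℝ) ^ 2) * ∑ _a : Fin n, ∑ _b : Fin n, g0 := by
                apply mul_le_mul_of_nonneg_left hsum (by positivity)
            _ = g0 := by
                simp only [Finset.sum_const, Finset.card_univ, Fintype.card_fin, nsmul_eq_mul]
                field_simp
      have hS21 : c * ∑ j : Fin d, Real.sqrt (∑ i : Fin d, (Mstar i j) ^ 2) ≤ g0 := by
        linarith
      have hmono : Real.sqrt (∑ i : Fin d, ∑ j : Fin d, (Mstar i j) ^ 2)
          ≤ ∑ j : Fin d, Real.sqrt (∑ i : Fin d, (Mstar i j) ^ 2) := by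
        rw [Finset.sum_comm]
        exact sqrt_sum_le_sum_sqrt _ _ fun j _ => by positivity
      rw [le_div_iff₀ hc]
      calc Real.sqrt (∑ i : Fin d, ∑ j : Fin d, (Mstar i j) ^ 2) * c
          = c * Real.sqrt (∑ i : Fin d, ∑ j : Fin d, (Mstar i j) ^ 2) := by ring
        _ ≤ c * ∑ j : Fin d, Real.sqrt (∑ i : Fin d, (Mstar i j) ^ 2) := by
            apply mul_le_mul_of_nonneg_left hmono hc.le
        _ ≤ g0 := hS21
    -- main estimate
    set u : Fin d → ℝ := fun i => (s a).1 i - (s b).1 i with hu_def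
    set v : Fin d → ℝ := fun i => z₁.1 i - z₂.1 i with hv_def
    set w : Fin d → ℝ := fun i => u i - v i with hw_def
    have hR0 : (0:ℝ) ≤ R := le_trans (Real.sqrt_nonneg _) (hR _ haX)
    have hnu : Real.sqrt (∑ i, (u i) ^ 2) ≤ 2 * R := by
      have := tri_sub (s a).1 (s b).1
      have h1 := hR _ haX
      have h2 := hR _ hbX
      simp only [hu_def]
      linarith
    have hnv : Real.sqrt (∑ i, (v i) ^ 2) ≤ 2 * R := by
      have := tri_sub z₁.1 z₂.1
      have h1 := hR _ h1X
      have h2 := hR _ h2X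
      simp only [hv_def]
      linarith
    have hnw : Real.sqrt (∑ i, (w i) ^ 2) ≤ 2 * γ := by
      have heq : ∑ i, (w i) ^ 2
          = ∑ i, (((s a).1 i - z₁.1 i) - ((s b).1 i - z₂.1 i)) ^ 2 := by
        congr 1; ext i; simp only [hw_def, hu_def, hv_def]; ring
      have := tri_sub (fun i => (s a).1 i - z₁.1 i) (fun i => (s b).1 i - z₂.1 i)
      rw [heq]
      exact le_trans this (by linarith)
    set Qu : ℝ := ∑ i : Fin d, ∑ j : Fin d, u i * Mstar i j * u j with hQu_def
    set Qv : ℝ := ∑ i : Fin d, ∑ j : Fin d, v i * Mstar i j * v j with hQv_def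
    set Fr : ℝ := Real.sqrt (∑ i : Fin d, ∑ j : Fin d, (Mstar i j) ^ 2) with hFr_def
    have hFr0 : 0 ≤ Fr := Real.sqrt_nonneg _
    have hQdiff : |Qu - Qv| ≤ 8 * R * γ * (g0 / c) := by
      have hdecomp : Qu - Qv
          = (∑ i : Fin d, ∑ j : Fin d, u i * Mstar i j * w j)
            + (∑ i : Fin d, ∑ j : Fin d, w i * Mstar i j * v j) := by
        rw [hQu_def, hQv_def, ← Finset.sum_sub_distrib, ← Finset.sum_add_distrib]
        congr 1; ext i
        rw [← Finset.sum_sub_distrib, ← Finset.sum_add_distrib]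
        congr 1; ext j
        simp only [hw_def]; ring
      have hb1 := bilin_bound Mstar u w
      have hb2 := bilin_bound Mstar w v
      have hprod1 : Real.sqrt (∑ i, (u i)^2) * Real.sqrt (∑ i, (w i)^2)
          ≤ (2 * R) * (2 * γ) :=
        mul_le_mul hnu hnw (Real.sqrt_nonneg _) (by positivity)
      have hprod2 : Real.sqrt (∑ i, (w i)^2) * Real.sqrt (∑ i, (v i)^2)
          ≤ (2 * γ) * (2 * R) :=
        mul_le_mul hnw hnv (Real.sqrt_nonneg _) (by positivity)
      have hg0c : (0:ℝ) ≤ g0 / c := by positivity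
      have hB1 : |∑ i : Fin d, ∑ j : Fin d, u i * Mstar i j * w j|
          ≤ (g0 / c) * ((2 * R) * (2 * γ)) := by
        refine le_trans hb1 ?_
        exact mul_le_mul hFrob hprod1 (by positivity) hg0c
      have hB2 : |∑ i : Fin d, ∑ j : Fin d, w i * Mstar i j * v j|
          ≤ (g0 / c) * ((2 * γ) * (2 * R)) := by
        refine le_trans hb2 ?_
        exact mul_le_mul hFrob hprod2 (by positivity) hg0c
      calc |Qu - Qv| ≤ |∑ i : Fin d, ∑ j : Fin d, u i * Mstar i j * w j|
            + |∑ i : Fin d, ∑ j : Fin d, w i * Mstar i j * v j| := by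
            rw [hdecomp]; exact abs_add_le _ _
        _ ≤ (g0 / c) * ((2 * R) * (2 * γ)) + (g0 / c) * ((2 * γ) * (2 * R)) := by
            linarith
        _ = 8 * R * γ * (g0 / c) := by ring
    -- conclude via Lipschitz
    rw [hy1, hy2]
    set A : ℝ := if z₁.2 = z₂.2 then (1:ℝ) else -1 with hA_def
    have hAbs : |A| = 1 := by
      rw [hA_def]; split_ifs <;> simp
    have hlip := hLip (A * (1 - Qu)) (A * (1 - Qv))
    have harg : |A * (1 - Qu) - A * (1 - Qv)| = |Qu - Qv| := by
      have : A * (1 - Qu) - A * (1 - Qv) = A * (Qv - Qu) := by ring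
      rw [this, abs_mul, hAbs, one_mul, abs_sub_comm]
    rw [harg] at hlip
    have hgoal : (g (A * (1 - Qu)) : ℝ) = g (A * (1 - ∑ i' : Fin d, ∑ j' : Fin d,
        ((s a).1 i' - (s b).1 i') * Mstar i' j' * ((s a).1 j' - (s b).1 j'))) := rfl
    calc |g (A * (1 - ∑ i' : Fin d, ∑ j' : Fin d,
            ((s a).1 i' - (s b).1 i') * Mstar i' j' * ((s a).1 j' - (s b).1 j')))
          - g (A * (1 - ∑ i' : Fin d, ∑ j' : Fin d,
            (z₁.1 i' - z₂.1 i') * Mstar i' j' * (z₁.1 j' - z₂.1 j')))|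
        = |g (A * (1 - Qu)) - g (A * (1 - Qv))| := rfl
      _ ≤ U * |Qu - Qv| := hlip
      _ ≤ U * (8 * R * γ * (g0 / c)) := by
          apply mul_le_mul_of_nonneg_left hQdiff hU
      _ = 8 * U * R * γ * g0 / c := by ring
end

section
/- Let φ: X → H be a continuous feature map into a Hilbert space H with kernel k(a,b) = ⟨φ(a), φ(b)⟩, X compact in ℝ^d. Let f_H(γ) = max_{a,b ∈ X, ‖a−b‖_2 ≤ γ}(k(a,a) + k(b,b) − 2k(a,b)) and B_γ = max_{x ∈ X} sqrt(k(x,x)). Let M be a bounded operator on H (or matrix in the feature space) with Hilbert–Schmidt norm ‖M‖_H ≤ g_0/c, and let g be U-Lipschitz. Then for x_1, x_2, x'_1, x'_2 ∈ X with ‖x_1−x'_1‖_2 ≤ γ and ‖x_2−x'_2‖_2 ≤ γ, and any y ∈ {−1,1}, |g(y[1 − (φ(x_1)−φ(x_2))^T M (φ(x_1)−φ(x_2))]) − g(y[1 − (φ(x'_1)−φ(x'_2))^T M (φ(x'_1)−φ(x'_2))])| ≤ 8U B_γ sqrt(f_H(γ)) g_0 / c. -/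
open RealInnerProductSpace

/-- Kernelized Lipschitz bound on the deviation of losses of close pairs. -/
theorem kernel_loss_deviation
    (d : ℕ) {H : Type*} [NormedAddCommGroup H] [InnerProductSpace ℝ H]
    (X : Set (Fin d → ℝ)) (hXcompact : IsCompact X)
    (φ : (Fin d → ℝ) → H) (hφ : ContinuousOn φ X)
    (k : (Fin d → ℝ) → (Fin d → ℝ) → ℝ) (hk : ∀ a b, k a b = ⟪φ a, φ b⟫)
    (γ fH Bγ : ℝ) (hγ : 0 < γ)
    (hfH : ∀ a ∈ X, ∀ b ∈ X, Real.sqrt (∑ i, (a i - b i) ^ 2) ≤ γ →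
      k a a + k b b - 2 * k a b ≤ fH)
    (hBγ : ∀ x ∈ X, Real.sqrt (k x x) ≤ Bγ)
    (M : H →L[ℝ] H) (g0 c : ℝ) (hc : 0 < c) (hM : ‖M‖ ≤ g0 / c)
    (g : ℝ → ℝ) (U : ℝ) (hU : 0 ≤ U)
    (hLip : ∀ a b : ℝ, |g a - g b| ≤ U * |a - b|)
    (x₁ x₂ x₁' x₂' : Fin d → ℝ)
    (hx₁ : x₁ ∈ X) (hx₂ : x₂ ∈ X) (hx₁' : x₁' ∈ X) (hx₂' : x₂' ∈ X)
    (hd₁ : Real.sqrt (∑ i, (x₁ i - x₁' i) ^ 2) ≤ γ)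
    (hd₂ : Real.sqrt (∑ i, (x₂ i - x₂' i) ^ 2) ≤ γ)
    (y : ℝ) (hy : y = 1 ∨ y = -1) :
    |g (y * (1 - ⟪φ x₁ - φ x₂, M (φ x₁ - φ x₂)⟫)) -
     g (y * (1 - ⟪φ x₁' - φ x₂', M (φ x₁' - φ x₂')⟫))|
      ≤ 8 * U * Bγ * Real.sqrt fH * g0 / c := by
  -- basic norm identity
  have hsq : ∀ a b : (Fin d → ℝ), ‖φ a - φ b‖ ^ 2 = k a a + k b b - 2 * k a b := by
    intro a b
    rw [@norm_sub_sq_real, hk, hk, hk, real_inner_self_eq_norm_sq, real_inner_self_eq_norm_sq]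
    ring
  have hclose : ∀ a ∈ X, ∀ b ∈ X, Real.sqrt (∑ i, (a i - b i) ^ 2) ≤ γ →
      ‖φ a - φ b‖ ≤ Real.sqrt fH := by
    intro a ha b hb hab
    have h1 : ‖φ a - φ b‖ ^ 2 ≤ fH := by rw [hsq]; exact hfH a ha b hb hab
    have := Real.sqrt_le_sqrt h1
    rwa [Real.sqrt_sq (norm_nonneg _)] at this
  have hnormB : ∀ x ∈ X, ‖φ x‖ ≤ Bγ := by
    intro x hx
    have : Real.sqrt (k x x) = ‖φ x‖ := by
      rw [hk, real_inner_self_eq_norm_sq, Real.sqrt_sq (norm_nonneg _)]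
    rw [← this]; exact hBγ x hx
  have hBγ0 : 0 ≤ Bγ := le_trans (Real.sqrt_nonneg _) (hBγ x₁ hx₁)
  have hg0c : 0 ≤ g0 / c := le_trans (norm_nonneg M) hM
  have hsf : 0 ≤ Real.sqrt fH := Real.sqrt_nonneg _
  set u := φ x₁ - φ x₂ with hu
  set v := φ x₁' - φ x₂' with hv
  have huB : ‖u‖ ≤ 2 * Bγ := by
    calc ‖u‖ ≤ ‖φ x₁‖ + ‖φ x₂‖ := norm_sub_le _ _
    _ ≤ 2 * Bγ := by have := hnormB x₁ hx₁; have := hnormB x₂ hx₂; linarith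
  have hvB : ‖v‖ ≤ 2 * Bγ := by
    calc ‖v‖ ≤ ‖φ x₁'‖ + ‖φ x₂'‖ := norm_sub_le _ _
    _ ≤ 2 * Bγ := by have := hnormB x₁' hx₁'; have := hnormB x₂' hx₂'; linarith
  have huv : ‖u - v‖ ≤ 2 * Real.sqrt fH := by
    have h1 := hclose x₁ hx₁ x₁' hx₁' hd₁
    have h2 := hclose x₂ hx₂ x₂' hx₂' hd₂
    calc ‖u - v‖ = ‖(φ x₁ - φ x₁') - (φ x₂ - φ x₂')‖ := by rw [hu, hv]; congr 1; abel
    _ ≤ ‖φ x₁ - φ x₁'‖ + ‖φ x₂ - φ x₂'‖ := norm_sub_le _ _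
    _ ≤ 2 * Real.sqrt fH := by linarith
  have hbil : ∀ (w z : H), |⟪w, M z⟫| ≤ ‖w‖ * ((g0 / c) * ‖z‖) := by
    intro w z
    calc |⟪w, M z⟫| ≤ ‖w‖ * ‖M z‖ := abs_real_inner_le_norm _ _
    _ ≤ ‖w‖ * ((g0 / c) * ‖z‖) := by
        apply mul_le_mul_of_nonneg_left _ (norm_nonneg _)
        calc ‖M z‖ ≤ ‖M‖ * ‖z‖ := M.le_opNorm z
        _ ≤ (g0 / c) * ‖z‖ := mul_le_mul_of_nonneg_right hM (norm_nonneg _)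
  have hdecomp : ⟪u, M u⟫ - ⟪v, M v⟫ = ⟪u - v, M u⟫ + ⟪v, M (u - v)⟫ := by
    simp only [hu, hv, map_sub, inner_sub_left, inner_sub_right]; ring
  have hAB : |⟪u, M u⟫ - ⟪v, M v⟫| ≤ 8 * Bγ * Real.sqrt fH * (g0 / c) := by
    rw [hdecomp]
    have h1 : |⟪u - v, M u⟫| ≤ (2 * Real.sqrt fH) * ((g0 / c) * (2 * Bγ)) := by
      calc |⟪u - v, M u⟫| ≤ ‖u - v‖ * ((g0 / c) * ‖u‖) := hbil _ _
      _ ≤ (2 * Real.sqrt fH) * ((g0 / c) * (2 * Bγ)) := by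
          apply mul_le_mul huv (mul_le_mul_of_nonneg_left huB hg0c)
            (by positivity) (by positivity)
    have h2 : |⟪v, M (u - v)⟫| ≤ (2 * Bγ) * ((g0 / c) * (2 * Real.sqrt fH)) := by
      calc |⟪v, M (u - v)⟫| ≤ ‖v‖ * ((g0 / c) * ‖u - v‖) := hbil _ _
      _ ≤ (2 * Bγ) * ((g0 / c) * (2 * Real.sqrt fH)) := by
          apply mul_le_mul hvB (mul_le_mul_of_nonneg_left huv hg0c)
            (by positivity) (by positivity)
    calc |⟪u - v, M u⟫ + ⟪v, M (u - v)⟫| ≤ |⟪u - v, M u⟫| + |⟪v, M (u - v)⟫| :=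
      abs_add_le _ _
    _ ≤ 8 * Bγ * Real.sqrt fH * (g0 / c) := by nlinarith
  have hyabs : |y| = 1 := by rcases hy with h | h <;> simp [h]
  calc |g (y * (1 - ⟪u, M u⟫)) - g (y * (1 - ⟪v, M v⟫))|
      ≤ U * |y * (1 - ⟪u, M u⟫) - y * (1 - ⟪v, M v⟫)| := hLip _ _
    _ = U * |⟪u, M u⟫ - ⟪v, M v⟫| := by
        rw [← mul_sub, abs_mul, hyabs, one_mul]
        congr 1; rw [abs_sub_comm]; ring_nf
    _ ≤ U * (8 * Bγ * Real.sqrt fH * (g0 / c)) :=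
        mul_le_mul_of_nonneg_left hAB hU
    _ = 8 * U * Bγ * Real.sqrt fH * g0 / c := by ring
end
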